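/- Under the standing hypotheses including (♠), φ is additive on each off-diagonal Peirce component: for i ≠ j and A_{ij}, B_{ij} ∈ 𝔄_{ij}, φ(A_{ij} + B_{ij}) = φ(A_{ij}) + φ(B_{ij}). -/
import Mathlib

set_option linter.unusedSectionVars false

set_option maxHeartbeats 1000000

/-- The *-Jordan product `{A,B}_* = AB + BA*`. -/
def jstar {R : Type*} [Ring R] [StarRing R] (A B : R) : R := A * B + B * star A

/-- The iterated *-Jordan product `q_{n*}(x_1, ..., x_n)`. -/
def qstar {R : Type*} [Ring R] [StarRing R] : List R → R
  | [] => 0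
  | x :: xs => xs.foldl jstar x

section helpers

variable {R : Type*} [Ring R] [StarRing R]

lemma rea {a b v : R} (h : a * b = v) (w : R) : a * (b * w) = v * w := by
  rw [← mul_assoc, h]

lemma omul {a e b : R} (ha : a * e = a) (hb : e * b = 0) : a * b = 0 := by
  rw [← ha, mul_assoc, hb, mul_zero]

lemma inc_lmul {P Q x : R} (hP : P * P = P) (h : P * (x * Q) = x) : P * x = x := by
  conv_lhs => rw [← h]
  rw [← mul_assoc, hP]
  exact h

lemma inc_rmul {P Q x : R} (hQ : Q * Q = Q) (h : P * (x * Q) = x) : x * Q = x := by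
  conv_lhs => rw [← h]
  rw [mul_assoc, mul_assoc, hQ]
  exact h

lemma inc_lzero {P x W : R} (hW : W * P = 0) (hl : P * x = x) : W * x = 0 := by
  rw [← hl, ← mul_assoc, hW, zero_mul]

lemma inc_rzero {Q x W : R} (hW : Q * W = 0) (hr : x * Q = x) : x * W = 0 := by
  rw [← hr, mul_assoc, hW, mul_zero]

lemma inc_star {P Q x : R} (hsP : star P = P) (hsQ : star Q = Q) (h : P * (x * Q) = x) :
    Q * (star x * P) = star x := by
  conv_rhs => rw [← h]
  rw [star_mul, star_mul, hsP, hsQ, mul_assoc]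

lemma jstar_add_right (C x y : R) : jstar C (x + y) = jstar C x + jstar C y := by
  simp only [jstar, mul_add, add_mul]; abel

lemma jstar_add_left (x y C : R) : jstar (x + y) C = jstar x C + jstar y C := by
  simp only [jstar, star_add, mul_add, add_mul]; abel

lemma star_nsmul' (k : ℕ) (x : R) : star (k • x) = k • star x := by
  induction k with
  | zero => simp
  | succ k ih => rw [succ_nsmul, succ_nsmul, star_add, ih]

lemma jstar_nsmul_left (k : ℕ) (x y : R) : jstar (k • x) y = k • jstar x y := by
  simp only [jstar, smul_mul_assoc, star_nsmul', mul_smul_comm, smul_add]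

lemma jstar_nsmul_right (k : ℕ) (C x : R) : jstar C (k • x) = k • jstar C x := by
  simp only [jstar, smul_mul_assoc, mul_smul_comm, smul_add]

lemma smul_corner {a v b : R} (k : ℕ) (h : a * (v * b) = v) :
    a * ((k • v) * b) = k • v := by
  rw [smul_mul_assoc, mul_smul_comm, h]

lemma foldl_jstar_nsmul (k : ℕ) (l : List R) : ∀ x : R,
    l.foldl jstar (k • x) = k • l.foldl jstar x := by
  induction l with
  | nil => intro x; rfl
  | cons a l ih => intro x; rw [List.foldl_cons, List.foldl_cons, jstar_nsmul_left, ih]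

lemma foldl_jstar_one (k : ℕ) :
    (List.replicate k (1 : R)).foldl jstar 1 = (2 ^ k : ℕ) • (1 : R) := by
  induction k with
  | zero => simp
  | succ k ih =>
    rw [List.replicate_succ, List.foldl_cons]
    have h1 : jstar (1 : R) 1 = (2 : ℕ) • (1 : R) := by
      rw [jstar, star_one, one_mul]
      exact (two_smul ℕ (1 : R)).symm
    rw [h1, foldl_jstar_nsmul, ih, smul_smul]
    congr 1
    ring

lemma qstar_ones (m : ℕ) (X Y : R) :
    qstar (List.replicate m (1 : R) ++ [X, Y]) = (2 ^ m : ℕ) • jstar X Y := by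
  cases m with
  | zero => simp [qstar]
  | succ m =>
    rw [List.replicate_succ, List.cons_append]
    show (List.replicate m (1 : R) ++ [X, Y]).foldl jstar 1 = (2 ^ (m + 1) : ℕ) • jstar X Y
    rw [List.foldl_append, foldl_jstar_one, foldl_jstar_nsmul]
    have h2 : ([X, Y] : List R).foldl jstar 1 = (2 : ℕ) • jstar X Y := by
      show jstar (jstar 1 X) Y = (2 : ℕ) • jstar X Y
      have hx : jstar (1 : R) X = (2 : ℕ) • X := by
        rw [jstar, star_one, one_mul, mul_one]
        exact (two_smul ℕ X).symm
      rw [hx, jstar_nsmul_left]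
    rw [h2, smul_smul, ← pow_succ]

end helpers

lemma nsmul_cancel {M : Type*} [AddCommGroup M] [Module ℂ M] {k : ℕ} (hk : k ≠ 0)
    {a b : M} (h : k • a = k • b) : a = b := by
  have h' : (k : ℂ) • a = (k : ℂ) • b := by
    rw [Nat.cast_smul_eq_nsmul, Nat.cast_smul_eq_nsmul]; exact h
  have hk' : (k : ℂ) ≠ 0 := Nat.cast_ne_zero.mpr hk
  calc a = (k : ℂ)⁻¹ • ((k : ℂ) • a) := (inv_smul_smul₀ hk' a).symm
    _ = (k : ℂ)⁻¹ • ((k : ℂ) • b) := by rw [h']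
    _ = b := inv_smul_smul₀ hk' b

lemma half0 {M : Type*} [AddCommGroup M] [Module ℂ M] {a : M} (h : a + a = 0) : a = 0 := by
  have h' : (2 : ℂ) • a = 0 := by rw [two_smul]; exact h
  have h2 : (2 : ℂ) ≠ 0 := by norm_num
  calc a = (2 : ℂ)⁻¹ • ((2 : ℂ) • a) := (inv_smul_smul₀ h2 a).symm
    _ = (2 : ℂ)⁻¹ • (0 : M) := by rw [h']
    _ = 0 := smul_zero _
theorem main_aux {𝔄 𝔄' : Type*} [CStarAlgebra 𝔄] [CStarAlgebra 𝔄']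
    (φ : 𝔄 → 𝔄') (hinj : Function.Injective φ) (hsurj : Function.Surjective φ)
    (c : ℕ) (hc : c ≠ 0)
    (hM : ∀ X Y : 𝔄, φ (c • jstar X Y) = c • jstar (φ X) (φ Y))
    (P Q : 𝔄) (hP : P * P = P) (hQ : Q * Q = Q) (hPQ : P * Q = 0) (hQP : Q * P = 0)
    (hsum : P + Q = 1) (hsP : star P = P) (hsQ : star Q = Q)
    (hspP : ∀ X : 𝔄, (∀ M : 𝔄, X * M * P = 0) → X = 0)
    (hspQ : ∀ X : 𝔄, (∀ M : 𝔄, X * M * Q = 0) → X = 0)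
    (A B : 𝔄) (hA : P * (A * Q) = A) (hB : P * (B * Q) = B) :
    φ (A + B) = φ A + φ B := by
  -- basic machinery
  have hφ0 : φ 0 = 0 := by
    obtain ⟨S, hS⟩ := hsurj 0
    have h1 : φ (c • jstar S 0) = 0 := by
      rw [hM, hS]; simp [jstar]
    have h2 : c • jstar S 0 = (0 : 𝔄) := by simp [jstar]
    rw [h2] at h1
    exact h1
  have cancφ : ∀ k : ℕ, k ≠ 0 → ∀ a b : 𝔄, φ (k • a) = φ (k • b) → a = b :=
    fun k hk a b h => nsmul_cancel hk (hinj h)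
  have pairL : ∀ x y t : 𝔄, φ t = φ x + φ y →
      ∀ C : 𝔄, φ (c • jstar C t) = φ (c • jstar C x) + φ (c • jstar C y) := by
    intro x y t ht C
    rw [hM, hM, hM, ht, jstar_add_right, smul_add]
  have pairR : ∀ x y t : 𝔄, φ t = φ x + φ y →
      ∀ C : 𝔄, φ (c • jstar t C) = φ (c • jstar x C) + φ (c • jstar y C) := by
    intro x y t ht C
    rw [hM, hM, hM, ht, jstar_add_left, smul_add]
  have tdec : ∀ t : 𝔄, t = (P * (t * P) + Q * (t * P)) + (P * (t * Q) + Q * (t * Q)) := by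
    intro t
    have h1 : t = (P + Q) * (t * (P + Q)) := by rw [hsum, mul_one, one_mul]
    rw [mul_add, mul_add, add_mul, add_mul] at h1
    exact h1
  have spadeQ_of : ∀ u v : 𝔄, u * P = u → v * P = v →
      (∀ D : 𝔄, P * (D * Q) = D → u * D = v * D) → u = v := by
    intro u v hu hv hk
    have h0 : u - v = 0 := by
      apply hspQ
      intro M
      have h1 : P * ((P * (M * Q)) * Q) = P * (M * Q) := by
        rw [mul_assoc, mul_assoc, hQ, ← mul_assoc, hP]
      have h3 := hk (P * (M * Q)) h1
      have h4 : u * M * Q = u * (P * (M * Q)) := by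
        rw [mul_assoc]
        conv_rhs => rw [← mul_assoc, hu]
      have h5 : v * M * Q = v * (P * (M * Q)) := by
        rw [mul_assoc]
        conv_rhs => rw [← mul_assoc, hv]
      rw [sub_mul, sub_mul, h4, h5, h3, sub_self]
    exact sub_eq_zero.mp h0
  have spadeP_of : ∀ u v : 𝔄, u * Q = u → v * Q = v →
      (∀ D : 𝔄, Q * (D * P) = D → u * D = v * D) → u = v := by
    intro u v hu hv hk
    have h0 : u - v = 0 := by
      apply hspP
      intro M
      have h1 : Q * ((Q * (M * P)) * P) = Q * (M * P) := by
        rw [mul_assoc, mul_assoc, hP, ← mul_assoc, hQ]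
      have h3 := hk (Q * (M * P)) h1
      have h4 : u * M * P = u * (Q * (M * P)) := by
        rw [mul_assoc]
        conv_rhs => rw [← mul_assoc, hu]
      have h5 : v * M * P = v * (Q * (M * P)) := by
        rw [mul_assoc]
        conv_rhs => rw [← mul_assoc, hv]
      rw [sub_mul, sub_mul, h4, h5, h3, sub_self]
    exact sub_eq_zero.mp h0
  -- L2 : additivity on (PQ) + (QP)
  have hL2 : ∀ x z : 𝔄, P * (x * Q) = x → Q * (z * P) = z → φ (x + z) = φ x + φ z := by
    intro x z hx hz
    have hx1 : P * x = x := inc_lmul hP hx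
    have hx2 : x * Q = x := inc_rmul hQ hx
    have hx3 : Q * x = 0 := inc_lzero hQP hx1
    have hx4 : x * P = 0 := inc_rzero hQP hx2
    have hsx : Q * (star x * P) = star x := inc_star hsP hsQ hx
    have hsx1 : Q * star x = star x := inc_lmul hQ hsx
    have hsx2 : star x * P = star x := inc_rmul hP hsx
    have hsx3 : P * star x = 0 := inc_lzero hPQ hsx1
    have hsx4 : star x * Q = 0 := inc_rzero hPQ hsx2
    have hz1 : Q * z = z := inc_lmul hQ hz
    have hz2 : z * P = z := inc_rmul hP hz
    have hz3 : P * z = 0 := inc_lzero hPQ hz1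
    have hz4 : z * Q = 0 := inc_rzero hPQ hz2
    have hsz : P * (star z * Q) = star z := inc_star hsQ hsP hz
    have hsz1 : P * star z = star z := inc_lmul hP hsz
    have hsz2 : star z * Q = star z := inc_rmul hQ hsz
    have hsz3 : Q * star z = 0 := inc_lzero hQP hsz1
    have hsz4 : star z * P = 0 := inc_rzero hQP hsz2
    obtain ⟨t, ht⟩ := hsurj (φ x + φ z)
    have e1 := pairL x z t ht P
    have e2 := pairL x z t ht Q
    have jPx : jstar P x = x := by rw [jstar, hsP, hx1, hx4, add_zero]
    have jPz : jstar P z = z := by rw [jstar, hsP, hz3, hz2, zero_add]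
    have jQx : jstar Q x = x := by rw [jstar, hsQ, hx3, hx2, zero_add]
    have jQz : jstar Q z = z := by rw [jstar, hsQ, hz1, hz4, add_zero]
    rw [jPx, jPz] at e1
    rw [jQx, jQz] at e2
    have e3 : P * t + t * P = Q * t + t * Q := by
      have h := cancφ c hc _ _ (e1.trans e2.symm)
      rwa [jstar, jstar, hsP, hsQ] at h
    have f1 : P * (t * P) = 0 := by
      have h := congrArg (fun w => P * (w * P)) e3
      simp only [add_mul, mul_add, mul_assoc, rea hPQ, rea hQP, rea hP, rea hQ, hP, hQ, hPQ,
        hQP, zero_mul, mul_zero, zero_add, add_zero] at h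
      exact half0 h
    have f2 : Q * (t * Q) = 0 := by
      have h := congrArg (fun w => Q * (w * Q)) e3
      simp only [add_mul, mul_add, mul_assoc, rea hPQ, rea hQP, rea hP, rea hQ, hP, hQ, hPQ,
        hQP, zero_mul, mul_zero, zero_add, add_zero] at h
      exact half0 h.symm
    have e4 := pairR x z t ht P
    have jxP : jstar x P = 0 := by rw [jstar, hx4, hsx3, add_zero]
    have jzP : jstar z P = z + star z := by rw [jstar, hz2, hsz1]
    rw [jxP, jzP, smul_zero, hφ0, zero_add] at e4
    have e5 : t * P + P * star t = z + star z := by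
      have h := cancφ c hc _ _ e4
      rwa [jstar] at h
    have f3 : Q * (t * P) = z := by
      have h := congrArg (fun w => Q * (w * P)) e5
      simp only [add_mul, mul_add, mul_assoc, rea hPQ, rea hQP, rea hP, rea hQ, hP, hQ, hPQ,
        hQP, zero_mul, mul_zero, zero_add, add_zero, hz2, hz1, hsz4] at h
      exact h
    have e6 := pairR x z t ht Q
    have jxQ : jstar x Q = x + star x := by rw [jstar, hx2, hsx1]
    have jzQ : jstar z Q = 0 := by rw [jstar, hz4, hsz3, add_zero]
    rw [jxQ, jzQ, smul_zero, hφ0, add_zero] at e6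
    have e7 : t * Q + Q * star t = x + star x := by
      have h := cancφ c hc _ _ e6
      rwa [jstar] at h
    have f4 : P * (t * Q) = x := by
      have h := congrArg (fun w => P * (w * Q)) e7
      simp only [add_mul, mul_add, mul_assoc, rea hPQ, rea hQP, rea hP, rea hQ, hP, hQ, hPQ,
        hQP, zero_mul, mul_zero, zero_add, add_zero, hx2, hx1, hsx4] at h
      exact h
    have httot : t = x + z := by
      have h := tdec t
      rw [f1, f2, f3, f4] at h
      exact h.trans (by abel)
    rw [httot] at ht
    exact ht
  -- L3a : additivity on (PP) + (PQ)
  have hL3a : ∀ x y : 𝔄, P * (x * P) = x → P * (y * Q) = y → φ (x + y) = φ x + φ y := by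
    intro x y hx hy
    have hx1 : P * x = x := inc_lmul hP hx
    have hx2 : x * P = x := inc_rmul hP hx
    have hx3 : Q * x = 0 := inc_lzero hQP hx1
    have hx4 : x * Q = 0 := inc_rzero hPQ hx2
    have hsx : P * (star x * P) = star x := inc_star hsP hsP hx
    have hsx1 : P * star x = star x := inc_lmul hP hsx
    have hsx2 : star x * P = star x := inc_rmul hP hsx
    have hsx3 : Q * star x = 0 := inc_lzero hQP hsx1
    have hsx4 : star x * Q = 0 := inc_rzero hPQ hsx2
    have hy1 : P * y = y := inc_lmul hP hy
    have hy2 : y * Q = y := inc_rmul hQ hy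
    have hy3 : Q * y = 0 := inc_lzero hQP hy1
    have hy4 : y * P = 0 := inc_rzero hQP hy2
    have hsy : Q * (star y * P) = star y := inc_star hsP hsQ hy
    have hsy1 : Q * star y = star y := inc_lmul hQ hsy
    have hsy2 : star y * P = star y := inc_rmul hP hsy
    have hsy3 : P * star y = 0 := inc_lzero hPQ hsy1
    have hsy4 : star y * Q = 0 := inc_rzero hPQ hsy2
    obtain ⟨t, ht⟩ := hsurj (φ x + φ y)
    -- Step 1 : jstar Q t = y
    have e1 := pairL x y t ht Q
    have jQx : jstar Q x = 0 := by rw [jstar, hsQ, hx3, hx4, add_zero]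
    have jQy : jstar Q y = y := by rw [jstar, hsQ, hy3, hy2, zero_add]
    rw [jQx, jQy, smul_zero, hφ0, zero_add] at e1
    have het : Q * t + t * Q = y := by
      have h := cancφ c hc _ _ e1
      rwa [jstar, hsQ] at h
    -- corners of t
    have g1 : P * (t * Q) = y := by
      have h := congrArg (fun w => P * (w * Q)) het
      simpa only [add_mul, mul_add, mul_assoc, rea hPQ, rea hQP, rea hP, rea hQ, hP, hQ, hPQ,
        hQP, zero_mul, mul_zero, zero_add, add_zero, hy] using h
    have g2 : Q * (t * P) = 0 := by
      have h := congrArg (fun w => Q * (w * P)) het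
      simpa only [add_mul, mul_add, mul_assoc, rea hPQ, rea hQP, rea hP, rea hQ, hP, hQ, hPQ,
        hQP, zero_mul, mul_zero, zero_add, add_zero, hy4] using h
    have g3 : Q * (t * Q) = 0 := by
      have h := congrArg (fun w => Q * (w * Q)) het
      simp only [add_mul, mul_add, mul_assoc, rea hPQ, rea hQP, rea hP, rea hQ, hP, hQ, hPQ,
        hQP, zero_mul, mul_zero, zero_add, add_zero, hy2, hy3] at h
      exact half0 h
    set S := P * (t * P) with hSdef
    have tS : t = S + y := by
      have h := tdec t
      rw [g1, g2, g3] at h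
      exact h.trans (by abel)
    have hS1 : P * S = S := by rw [hSdef]; exact rea hP _
    have hS2 : S * P = S := by rw [hSdef, mul_assoc, mul_assoc, hP]
    have hS3 : Q * S = 0 := inc_lzero hQP hS1
    have hsS1 : P * star S = star S := by
      have h := congrArg star hS2
      rwa [star_mul, hsP] at h
    have hsS3 : Q * star S = 0 := inc_lzero hQP hsS1
    -- key : S * D = x * D for D in corner PQ
    have key : ∀ D : 𝔄, P * (D * Q) = D → S * D = x * D := by
      intro D hD
      have hD1 : P * D = D := inc_lmul hP hD
      have hD2 : D * Q = D := inc_rmul hQ hD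
      have hD3 : Q * D = 0 := inc_lzero hQP hD1
      have hD4 : D * P = 0 := inc_rzero hQP hD2
      have jxD : jstar x D = x * D := by
        rw [jstar, omul hD2 hsx3, add_zero]
      have jyD : jstar y D = D * star y := by
        rw [jstar, omul hy2 hD3, zero_add]
      have jtD : jstar t D = S * D + D * star y := by
        rw [jstar, tS, star_add, add_mul, mul_add, omul hy2 hD3, omul hD2 hsS3, add_zero,
          zero_add]
      have e2 := pairR x y t ht D
      rw [jxD, jyD, jtD] at e2
      have e3 := pairL _ _ _ e2 Q
      have pQxD : Q * (x * D) = 0 := by rw [← mul_assoc, hx3, zero_mul]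
      have pxDQ : (x * D) * Q = x * D := by rw [mul_assoc, hD2]
      have pQDy : Q * (D * star y) = 0 := by rw [← mul_assoc, hD3, zero_mul]
      have pDyQ : (D * star y) * Q = 0 := by rw [mul_assoc, hsy4, mul_zero]
      have pQSD : Q * (S * D) = 0 := by rw [← mul_assoc, hS3, zero_mul]
      have pSDQ : (S * D) * Q = S * D := by rw [mul_assoc, hD2]
      have hα : jstar Q (c • (x * D)) = c • (x * D) := by
        rw [jstar_nsmul_right, jstar, hsQ, pQxD, pxDQ, zero_add]
      have hβ : jstar Q (c • (D * star y)) = 0 := by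
        rw [jstar_nsmul_right, jstar, hsQ, pQDy, pDyQ, add_zero, smul_zero]
      have hγ : jstar Q (c • (S * D + D * star y)) = c • (S * D) := by
        rw [jstar_nsmul_right, jstar, hsQ, mul_add, add_mul, pQSD, pQDy, pSDQ, pDyQ]
        simp only [zero_add, add_zero]
      rw [hα, hβ, hγ, smul_zero, hφ0, add_zero, smul_smul, smul_smul] at e3
      exact cancφ (c * c) (Nat.mul_ne_zero hc hc) _ _ e3
    have hSx : S = x := spadeQ_of _ _ hS2 hx2 key
    rw [tS, hSx] at ht
    exact ht
  -- L3b : additivity on (QQ) + (PQ)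
  have hL3b : ∀ x y : 𝔄, Q * (x * Q) = x → P * (y * Q) = y → φ (x + y) = φ x + φ y := by
    intro x y hx hy
    have hx1 : Q * x = x := inc_lmul hQ hx
    have hx2 : x * Q = x := inc_rmul hQ hx
    have hx3 : P * x = 0 := inc_lzero hPQ hx1
    have hx4 : x * P = 0 := inc_rzero hQP hx2
    have hsx : Q * (star x * Q) = star x := inc_star hsQ hsQ hx
    have hsx1 : Q * star x = star x := inc_lmul hQ hsx
    have hsx2 : star x * Q = star x := inc_rmul hQ hsx
    have hsx3 : P * star x = 0 := inc_lzero hPQ hsx1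
    have hsx4 : star x * P = 0 := inc_rzero hQP hsx2
    have hy1 : P * y = y := inc_lmul hP hy
    have hy2 : y * Q = y := inc_rmul hQ hy
    have hy3 : Q * y = 0 := inc_lzero hQP hy1
    have hy4 : y * P = 0 := inc_rzero hQP hy2
    have hsy : Q * (star y * P) = star y := inc_star hsP hsQ hy
    have hsy1 : Q * star y = star y := inc_lmul hQ hsy
    have hsy2 : star y * P = star y := inc_rmul hP hsy
    have hsy3 : P * star y = 0 := inc_lzero hPQ hsy1
    have hsy4 : star y * Q = 0 := inc_rzero hPQ hsy2
    obtain ⟨t, ht⟩ := hsurj (φ x + φ y)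
    -- Step 1 : jstar P t = y
    have e1 := pairL x y t ht P
    have jPx : jstar P x = 0 := by rw [jstar, hsP, hx3, hx4, add_zero]
    have jPy : jstar P y = y := by rw [jstar, hsP, hy1, hy4, add_zero]
    rw [jPx, jPy, smul_zero, hφ0, zero_add] at e1
    have het : P * t + t * P = y := by
      have h := cancφ c hc _ _ e1
      rwa [jstar, hsP] at h
    -- corners of t
    have g1 : P * (t * Q) = y := by
      have h := congrArg (fun w => P * (w * Q)) het
      simpa only [add_mul, mul_add, mul_assoc, rea hPQ, rea hQP, rea hP, rea hQ, hP, hQ, hPQ,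
        hQP, zero_mul, mul_zero, zero_add, add_zero, hy] using h
    have g2 : P * (t * P) = 0 := by
      have h := congrArg (fun w => P * (w * P)) het
      simp only [add_mul, mul_add, mul_assoc, rea hPQ, rea hQP, rea hP, rea hQ, hP, hQ, hPQ,
        hQP, zero_mul, mul_zero, zero_add, add_zero, hy4] at h
      exact half0 h
    have g3 : Q * (t * P) = 0 := by
      have h := congrArg (fun w => Q * (w * P)) het
      simpa only [add_mul, mul_add, mul_assoc, rea hPQ, rea hQP, rea hP, rea hQ, hP, hQ, hPQ,
        hQP, zero_mul, mul_zero, zero_add, add_zero, hy4] using h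
    set S := Q * (t * Q) with hSdef
    have tS : t = S + y := by
      have h := tdec t
      rw [g1, g2, g3] at h
      exact h.trans (by abel)
    have hS1 : Q * S = S := by rw [hSdef]; exact rea hQ _
    have hS2 : S * Q = S := by rw [hSdef, mul_assoc, mul_assoc, hQ]
    have hS3 : P * S = 0 := inc_lzero hPQ hS1
    have hsS1 : Q * star S = star S := by
      have h := congrArg star hS2
      rwa [star_mul, hsQ] at h
    have hsS3 : P * star S = 0 := inc_lzero hPQ hsS1
    -- key : S * D = x * D for D in corner QP
    have key : ∀ D : 𝔄, Q * (D * P) = D → S * D = x * D := by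
      intro D hD
      have hD1 : Q * D = D := inc_lmul hQ hD
      have hD2 : D * P = D := inc_rmul hP hD
      have hD3 : P * D = 0 := inc_lzero hPQ hD1
      have hD4 : D * Q = 0 := inc_rzero hPQ hD2
      have jxD : jstar x D = x * D := by
        rw [jstar, omul hD2 hsx3, add_zero]
      have jyD : jstar y D = y * D := by
        rw [jstar, omul hD2 hsy3, add_zero]
      have jtD : jstar t D = S * D + y * D := by
        rw [jstar, tS, star_add, add_mul, mul_add, omul hD2 hsS3, omul hD2 hsy3]
        simp only [add_zero, zero_add]
      have e2 := pairR x y t ht D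
      rw [jxD, jyD, jtD] at e2
      have e3 := pairL _ _ _ e2 Q
      have pQxD : Q * (x * D) = x * D := by rw [← mul_assoc, hx1]
      have pxDQ : (x * D) * Q = 0 := by rw [mul_assoc, hD4, mul_zero]
      have pQyD : Q * (y * D) = 0 := by rw [← mul_assoc, hy3, zero_mul]
      have pyDQ : (y * D) * Q = 0 := by rw [mul_assoc, hD4, mul_zero]
      have pQSD : Q * (S * D) = S * D := by rw [← mul_assoc, hS1]
      have pSDQ : (S * D) * Q = 0 := by rw [mul_assoc, hD4, mul_zero]
      have hα : jstar Q (c • (x * D)) = c • (x * D) := by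
        rw [jstar_nsmul_right, jstar, hsQ, pQxD, pxDQ, add_zero]
      have hβ : jstar Q (c • (y * D)) = 0 := by
        rw [jstar_nsmul_right, jstar, hsQ, pQyD, pyDQ, add_zero, smul_zero]
      have hγ : jstar Q (c • (S * D + y * D)) = c • (S * D) := by
        rw [jstar_nsmul_right, jstar, hsQ, mul_add, add_mul, pQSD, pQyD, pSDQ, pyDQ]
        simp only [zero_add, add_zero]
      rw [hα, hβ, hγ, smul_zero, hφ0, add_zero, smul_smul, smul_smul] at e3
      exact cancφ (c * c) (Nat.mul_ne_zero hc hc) _ _ e3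
    have hSx : S = x := spadeP_of _ _ hS2 hx2 key
    rw [tS, hSx] at ht
    exact ht
  -- L5 : additivity on (PP) + ((PQ) + (QP))
  have hL5 : ∀ x y z : 𝔄, P * (x * P) = x → P * (y * Q) = y → Q * (z * P) = z →
      φ (x + (y + z)) = φ x + (φ y + φ z) := by
    intro x y z hx hy hz
    have hx1 : P * x = x := inc_lmul hP hx
    have hx2 : x * P = x := inc_rmul hP hx
    have hx3 : Q * x = 0 := inc_lzero hQP hx1
    have hx4 : x * Q = 0 := inc_rzero hPQ hx2
    have hsx : P * (star x * P) = star x := inc_star hsP hsP hx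
    have hsx1 : P * star x = star x := inc_lmul hP hsx
    have hsx2 : star x * P = star x := inc_rmul hP hsx
    have hsx3 : Q * star x = 0 := inc_lzero hQP hsx1
    have hsx4 : star x * Q = 0 := inc_rzero hPQ hsx2
    have hy1 : P * y = y := inc_lmul hP hy
    have hy2 : y * Q = y := inc_rmul hQ hy
    have hy3 : Q * y = 0 := inc_lzero hQP hy1
    have hy4 : y * P = 0 := inc_rzero hQP hy2
    have hsy : Q * (star y * P) = star y := inc_star hsP hsQ hy
    have hsy1 : Q * star y = star y := inc_lmul hQ hsy
    have hsy2 : star y * P = star y := inc_rmul hP hsy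
    have hsy3 : P * star y = 0 := inc_lzero hPQ hsy1
    have hsy4 : star y * Q = 0 := inc_rzero hPQ hsy2
    have hz1 : Q * z = z := inc_lmul hQ hz
    have hz2 : z * P = z := inc_rmul hP hz
    have hz3 : P * z = 0 := inc_lzero hPQ hz1
    have hz4 : z * Q = 0 := inc_rzero hPQ hz2
    have hsz : P * (star z * Q) = star z := inc_star hsQ hsP hz
    have hsz1 : P * star z = star z := inc_lmul hP hsz
    have hsz2 : star z * Q = star z := inc_rmul hQ hsz
    have hsz3 : Q * star z = 0 := inc_lzero hQP hsz1
    have hsz4 : star z * P = 0 := inc_rzero hQP hsz2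
    obtain ⟨t, ht⟩ := hsurj (φ x + φ (y + z))
    -- Step 1 : jstar Q t = y + z
    have e1 := pairL x (y + z) t ht Q
    have jQx : jstar Q x = 0 := by rw [jstar, hsQ, hx3, hx4, add_zero]
    have jQv : jstar Q (y + z) = y + z := by
      rw [jstar, hsQ, mul_add, add_mul, hy3, hz1, hy2, hz4]
      abel
    rw [jQx, jQv, smul_zero, hφ0, zero_add] at e1
    have het : Q * t + t * Q = y + z := by
      have h := cancφ c hc _ _ e1
      rwa [jstar, hsQ] at h
    -- corners of t
    have g1 : P * (t * Q) = y := by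
      have h := congrArg (fun w => P * (w * Q)) het
      simp only [add_mul, mul_add, mul_assoc, rea hPQ, rea hQP, rea hP, rea hQ, hP, hQ, hPQ,
        hQP, zero_mul, mul_zero, zero_add, add_zero, hy, hz4] at h
      exact h
    have g2 : Q * (t * P) = z := by
      have h := congrArg (fun w => Q * (w * P)) het
      simp only [add_mul, mul_add, mul_assoc, rea hPQ, rea hQP, rea hP, rea hQ, hP, hQ, hPQ,
        hQP, zero_mul, mul_zero, zero_add, add_zero, hy4, hz2, hz1] at h
      exact h
    have g3 : Q * (t * Q) = 0 := by
      have h := congrArg (fun w => Q * (w * Q)) het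
      simp only [add_mul, mul_add, mul_assoc, rea hPQ, rea hQP, rea hP, rea hQ, hP, hQ, hPQ,
        hQP, zero_mul, mul_zero, zero_add, add_zero, hy2, hy3, hz4] at h
      exact half0 h
    set S := P * (t * P) with hSdef
    have tS : t = S + (y + z) := by
      have h := tdec t
      rw [g1, g2, g3] at h
      exact h.trans (by abel)
    have hS1 : P * S = S := by rw [hSdef]; exact rea hP _
    have hS2 : S * P = S := by rw [hSdef, mul_assoc, mul_assoc, hP]
    have hS3 : Q * S = 0 := inc_lzero hQP hS1
    have hsS1 : P * star S = star S := by
      have h := congrArg star hS2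
      rwa [star_mul, hsP] at h
    have hsS3 : Q * star S = 0 := inc_lzero hQP hsS1
    -- key
    have key : ∀ D : 𝔄, P * (D * Q) = D → S * D = x * D := by
      intro D hD
      have hD1 : P * D = D := inc_lmul hP hD
      have hD2 : D * Q = D := inc_rmul hQ hD
      have hD3 : Q * D = 0 := inc_lzero hQP hD1
      have hD4 : D * P = 0 := inc_rzero hQP hD2
      have jxD : jstar x D = x * D := by
        rw [jstar, omul hD2 hsx3, add_zero]
      have jvD : jstar (y + z) D = z * D + D * star y := by
        rw [jstar, star_add, add_mul, mul_add, omul hy2 hD3, omul hD2 hsz3]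
        simp only [zero_add, add_zero]
      have jtD : jstar t D = S * D + (z * D + D * star y) := by
        rw [jstar, tS, star_add, star_add, add_mul, add_mul, mul_add, mul_add,
          omul hy2 hD3, omul hD2 hsS3, omul hD2 hsz3]
        abel
      have e2 := pairR x (y + z) t ht D
      rw [jxD, jvD, jtD] at e2
      have e3 := pairL _ _ _ e2 Q
      have pQxD : Q * (x * D) = 0 := by rw [← mul_assoc, hx3, zero_mul]
      have pxDQ : (x * D) * Q = x * D := by rw [mul_assoc, hD2]
      have pQzD : Q * (z * D) = z * D := by rw [← mul_assoc, hz1]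
      have pzDQ : (z * D) * Q = z * D := by rw [mul_assoc, hD2]
      have pQDy : Q * (D * star y) = 0 := by rw [← mul_assoc, hD3, zero_mul]
      have pDyQ : (D * star y) * Q = 0 := by rw [mul_assoc, hsy4, mul_zero]
      have pQSD : Q * (S * D) = 0 := by rw [← mul_assoc, hS3, zero_mul]
      have pSDQ : (S * D) * Q = S * D := by rw [mul_assoc, hD2]
      have hα : jstar Q (c • (x * D)) = c • (x * D) := by
        rw [jstar_nsmul_right, jstar, hsQ, pQxD, pxDQ, zero_add]
      have hβ : jstar Q (c • (z * D + D * star y)) = c • (z * D + z * D) := by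
        rw [jstar_nsmul_right, jstar, hsQ, mul_add, add_mul, pQzD, pQDy, pzDQ, pDyQ]
        congr 1
        abel
      have hγ : jstar Q (c • (S * D + (z * D + D * star y))) =
          c • (S * D + (z * D + z * D)) := by
        rw [jstar_nsmul_right, jstar, hsQ, mul_add, mul_add, add_mul, add_mul,
          pQSD, pQzD, pQDy, pSDQ, pzDQ, pDyQ]
        congr 1
        abel
      rw [hα, hβ, hγ, smul_smul, smul_smul, smul_smul] at e3
      have e4 := pairL _ _ _ e3 P
      have pPxD : P * (x * D) = x * D := by rw [← mul_assoc, hx1]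
      have pxDP : (x * D) * P = 0 := by rw [mul_assoc, hD4, mul_zero]
      have pPzD : P * (z * D) = 0 := by rw [← mul_assoc, hz3, zero_mul]
      have pzDP : (z * D) * P = 0 := by rw [mul_assoc, hD4, mul_zero]
      have pPSD : P * (S * D) = S * D := by rw [← mul_assoc, hS1]
      have pSDP : (S * D) * P = 0 := by rw [mul_assoc, hD4, mul_zero]
      have hα2 : jstar P ((c * c) • (x * D)) = (c * c) • (x * D) := by
        rw [jstar_nsmul_right, jstar, hsP, pPxD, pxDP, add_zero]
      have hβ2 : jstar P ((c * c) • (z * D + z * D)) = 0 := by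
        rw [jstar_nsmul_right, jstar, hsP, mul_add, add_mul, pPzD, pzDP]
        simp
      have hγ2 : jstar P ((c * c) • (S * D + (z * D + z * D))) = (c * c) • (S * D) := by
        rw [jstar_nsmul_right, jstar, hsP, mul_add, mul_add, add_mul, add_mul,
          pPSD, pPzD, pSDP, pzDP]
        congr 1
        abel
      rw [hα2, hβ2, hγ2, smul_zero, hφ0, add_zero, smul_smul, smul_smul] at e4
      exact cancφ (c * (c * c)) (Nat.mul_ne_zero hc (Nat.mul_ne_zero hc hc)) _ _ e4
    have hSx : S = x := spadeQ_of _ _ hS2 hx2 key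
    have htt : t = x + (y + z) := by rw [tS, hSx]
    rw [htt] at ht
    rw [ht, hL2 y z hy hz]
  -- main2 : scaled additivity on corner PQ
  have main2 : ∀ X Y : 𝔄, P * (X * Q) = X → P * (Y * Q) = Y →
      φ (c • (X + Y)) = φ (c • X) + φ (c • Y) := by
    intro X Y hX hY
    have hX1 : P * X = X := inc_lmul hP hX
    have hX2 : X * Q = X := inc_rmul hQ hX
    have hX3 : Q * X = 0 := inc_lzero hQP hX1
    have hX4 : X * P = 0 := inc_rzero hQP hX2
    have hY1 : P * Y = Y := inc_lmul hP hY
    have hY2 : Y * Q = Y := inc_rmul hQ hY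
    have hY3 : Q * Y = 0 := inc_lzero hQP hY1
    have hY4 : Y * P = 0 := inc_rzero hQP hY2
    have hsY : Q * (star Y * P) = star Y := inc_star hsP hsQ hY
    have hsY1 : Q * star Y = star Y := inc_lmul hQ hsY
    have hsY2 : star Y * P = star Y := inc_rmul hP hsY
    have h1 : φ (P + Y) = φ P + φ Y := hL3a P Y (by rw [hP, hP]) hY
    have h2 : φ (X + Q) = φ X + φ Q := by
      have h := hL3b Q X (by rw [hQ, hQ]) hX
      rw [add_comm Q X] at h
      exact h.trans (add_comm _ _)
    have h3 := hM (P + Y) (X + Q)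
    have w1 : (P + Y) * (X + Q) = X + Y := by
      rw [mul_add, add_mul, add_mul, hX1, omul hY2 hX3, hPQ, hY2, add_zero, zero_add]
    have w2 : (X + Q) * star (P + Y) = X * star Y + star Y := by
      rw [star_add, hsP, mul_add, add_mul, add_mul, hX4, hQP, hsY1, add_zero, zero_add]
    have w : jstar (P + Y) (X + Q) = X * star Y + ((X + Y) + star Y) := by
      rw [jstar, w1, w2]
      abel
    rw [w, h1, h2] at h3
    conv at h3 =>
      rhs
      rw [jstar_add_left, jstar_add_right, jstar_add_right, smul_add, smul_add, smul_add]
    rw [← hM P X, ← hM P Q, ← hM Y X, ← hM Y Q] at h3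
    have j1 : jstar P X = X := by rw [jstar, hsP, hX1, hX4, add_zero]
    have j2 : jstar P Q = 0 := by rw [jstar, hsP, hPQ, hQP, add_zero]
    have j3 : jstar Y X = X * star Y := by rw [jstar, omul hY2 hX3, zero_add]
    have j4 : jstar Y Q = Y + star Y := by rw [jstar, hY2, hsY1]
    rw [j1, j2, j3, j4, smul_zero, hφ0] at h3
    have d1 : P * ((c • (X * star Y)) * P) = c • (X * star Y) :=
      smul_corner c (by rw [mul_assoc, hsY2, ← mul_assoc, hX1])
    have d2 : P * ((c • (X + Y)) * Q) = c • (X + Y) :=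
      smul_corner c (by rw [add_mul, mul_add, hX, hY])
    have d3 : Q * ((c • star Y) * P) = c • star Y := smul_corner c hsY
    have split1 : φ (c • (X * star Y) + (c • (X + Y) + c • star Y)) =
        φ (c • (X * star Y)) + (φ (c • (X + Y)) + φ (c • star Y)) := hL5 _ _ _ d1 d2 d3
    have split2 : φ (c • (Y + star Y)) = φ (c • Y) + φ (c • star Y) := by
      rw [smul_add]
      exact hL2 _ _ (smul_corner c hY) (smul_corner c hsY)
    have lhseq : c • (X * star Y + ((X + Y) + star Y)) =
        c • (X * star Y) + (c • (X + Y) + c • star Y) := by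
      rw [smul_add, smul_add]
    rw [lhseq, split1, split2] at h3
    have h7 : φ (c • (X + Y)) - (φ (c • X) + φ (c • Y)) =
        (φ (c • (X * star Y)) + (φ (c • (X + Y)) + φ (c • star Y))) -
          (φ (c • X) + 0 + (φ (c • (X * star Y)) + (φ (c • Y) + φ (c • star Y)))) := by
      abel
    rw [h3, sub_self] at h7
    exact sub_eq_zero.mp h7
  -- conclude by rescaling
  have hc' : ((c : ℂ)) ≠ 0 := Nat.cast_ne_zero.mpr hc
  have hcA : c • ((c : ℂ)⁻¹ • A) = A := by
    rw [← Nat.cast_smul_eq_nsmul ℂ, smul_smul, mul_inv_cancel₀ hc', one_smul]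
  have hcB : c • ((c : ℂ)⁻¹ • B) = B := by
    rw [← Nat.cast_smul_eq_nsmul ℂ, smul_smul, mul_inv_cancel₀ hc', one_smul]
  have cornerA : P * (((c : ℂ)⁻¹ • A) * Q) = (c : ℂ)⁻¹ • A := by
    rw [smul_mul_assoc, mul_smul_comm, hA]
  have cornerB : P * (((c : ℂ)⁻¹ • B) * Q) = (c : ℂ)⁻¹ • B := by
    rw [smul_mul_assoc, mul_smul_comm, hB]
  have h := main2 _ _ cornerA cornerB
  rw [smul_add] at h
  simp only [hcA, hcB] at h
  exact h
theorem stmt7 {𝔄 𝔄' : Type*} [CStarAlgebra 𝔄] [CStarAlgebra 𝔄']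
    (n : ℕ) (hn : 2 ≤ n)
    (P₁ : 𝔄) (hproj : P₁ * P₁ = P₁) (hsa : star P₁ = P₁) (hne0 : P₁ ≠ 0) (hne1 : P₁ ≠ 1)
    (φ : 𝔄 → 𝔄') (hbij : Function.Bijective φ) (hunital : φ 1 = 1)
    (hqI : ∀ A B : 𝔄, φ (qstar (List.replicate (n - 2) 1 ++ [A, B])) =
      qstar (List.replicate (n - 2) (φ 1) ++ [φ A, φ B]))
    (hqP : ∀ P ∈ ({P₁, 1 - P₁} : Set 𝔄), ∀ A B : 𝔄,
      φ (qstar (List.replicate (n - 2) P ++ [A, B])) =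
      qstar (List.replicate (n - 2) (φ P) ++ [φ A, φ B]))
    (hspade : ∀ P ∈ ({P₁, 1 - P₁} : Set 𝔄), ∀ X : 𝔄, (∀ A : 𝔄, X * A * P = 0) → X = 0) :
    ∀ Pi ∈ ({P₁, 1 - P₁} : Set 𝔄), ∀ Pj ∈ ({P₁, 1 - P₁} : Set 𝔄), Pi ≠ Pj →
      ∀ A B : 𝔄, Pi * A * Pj = A → Pi * B * Pj = B →
      φ (A + B) = φ A + φ B := by
  have hM : ∀ X Y : 𝔄, φ ((2 ^ (n - 2) : ℕ) • jstar X Y) =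
      (2 ^ (n - 2) : ℕ) • jstar (φ X) (φ Y) := by
    intro X Y
    have h := hqI X Y
    rw [hunital, qstar_ones, qstar_ones] at h
    exact h
  have hc : (2 ^ (n - 2) : ℕ) ≠ 0 := pow_ne_zero _ (by norm_num)
  have hQQ : (1 - P₁) * (1 - P₁) = 1 - P₁ := by
    rw [sub_mul, one_mul, mul_sub, mul_one, hproj]
    abel
  have hPQ : P₁ * (1 - P₁) = 0 := by rw [mul_sub, mul_one, hproj, sub_self]
  have hQP : (1 - P₁) * P₁ = 0 := by rw [sub_mul, one_mul, hproj, sub_self]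
  have hsum : P₁ + (1 - P₁) = 1 := by abel
  have hsum' : (1 - P₁) + P₁ = 1 := by abel
  have hsQ : star (1 - P₁) = 1 - P₁ := by rw [star_sub, star_one, hsa]
  have hsp1 : ∀ X : 𝔄, (∀ M : 𝔄, X * M * P₁ = 0) → X = 0 :=
    hspade P₁ (Set.mem_insert _ _)
  have hsp2 : ∀ X : 𝔄, (∀ M : 𝔄, X * M * (1 - P₁) = 0) → X = 0 :=
    hspade (1 - P₁) (Set.mem_insert_of_mem _ rfl)
  intro Pi hPi Pj hPj hne A B hA hB
  have hA' : Pi * (A * Pj) = A := by rw [← mul_assoc]; exact hA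
  have hB' : Pi * (B * Pj) = B := by rw [← mul_assoc]; exact hB
  simp only [Set.mem_insert_iff, Set.mem_singleton_iff] at hPi hPj
  rcases hPi with h1 | h1 <;> rcases hPj with h2 | h2
  · exact absurd (h1.trans h2.symm) hne
  · rw [h1, h2] at hA' hB'
    exact main_aux φ hbij.1 hbij.2 _ hc hM P₁ (1 - P₁) hproj hQQ hPQ hQP hsum hsa hsQ
      hsp1 hsp2 A B hA' hB'
  · rw [h1, h2] at hA' hB'
    exact main_aux φ hbij.1 hbij.2 _ hc hM (1 - P₁) P₁ hQQ hproj hQP hPQ hsum' hsQ hsa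
      hsp2 hsp1 A B hA' hB'
  · exact absurd (h1.trans h2.symm) hne
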